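/- arXiv:1310.2787 — 2 statements merged into one kernel-verified Lean document; each statement's English description precedes it below -/
import Mathlib

section
/- Let Ω = {x ∈ ℝ³ : R₁ < |x| < R₂} with spherical coordinates (r, χ, θ). Define u_r = m Ũ(r) cos(mθ) sin χ, u_χ ≡ 0, u_θ = (1/r) W(r) sin(mθ) sin²χ, where Ũ(r) = U(r)/r, U(r) = (1/r)((R₂−R₁)/(2π))(cos(2π(r−R₁)/(R₂−R₁)) − 1), and W(r) = sin(2π(r−R₁)/(R₂−R₁)). Then the vector field u = u_r e_r + u_χ e_χ + u_θ e_θ is divergence-free on Ω and vanishes on ∂Ω. -/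
open Real

/-- The 3D test field `u_r = m Ũ(r) cos(mθ) sin χ`, `u_χ = 0`,
`u_θ = (1/r) W(r) sin(mθ) sin²χ` (with `Ũ = U/r`) is divergence-free on the spherical shell,
in the sense of the spherical-coordinates divergence formula, and vanishes for `r = R₁, R₂`. -/
theorem stmt_16 (R₁ R₂ : ℝ) (hR₁ : 0 < R₁) (hR : R₁ < R₂) (m : ℕ) (hm : 0 < m)
    (U W : ℝ → ℝ)
    (hU : ∀ r, U r = (1 / r) * ((R₂ - R₁) / (2 * π)) *
      (Real.cos (2 * π * (r - R₁) / (R₂ - R₁)) - 1))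
    (hW : ∀ r, W r = Real.sin (2 * π * (r - R₁) / (R₂ - R₁)))
    (ur uχ uθ : ℝ → ℝ → ℝ → ℝ)
    (hur : ∀ r χ θ, ur r χ θ = (m : ℝ) * (U r / r) * Real.cos (m * θ) * Real.sin χ)
    (huχ : ∀ r χ θ, uχ r χ θ = 0)
    (huθ : ∀ r χ θ, uθ r χ θ = (1 / r) * W r * Real.sin (m * θ) * Real.sin χ ^ 2) :
    (∀ r ∈ Set.Ioo R₁ R₂, ∀ χ ∈ Set.Ioo 0 π, ∀ θ : ℝ,
      (1 / r ^ 2) * deriv (fun s => s ^ 2 * ur s χ θ) r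
        + (1 / (r * Real.sin χ)) * deriv (fun φ => Real.sin φ * uχ r φ θ) χ
        + (1 / (r * Real.sin χ)) * deriv (fun t => uθ r χ t) θ = 0) ∧
    (∀ χ θ : ℝ, ur R₁ χ θ = 0 ∧ ur R₂ χ θ = 0 ∧ uχ R₁ χ θ = 0 ∧ uχ R₂ χ θ = 0 ∧
      uθ R₁ χ θ = 0 ∧ uθ R₂ χ θ = 0) := by
  have hD : R₂ - R₁ ≠ 0 := by linarith
  have hπ : (π : ℝ) ≠ 0 := Real.pi_ne_zero
  constructor
  · intro r hr χ hχ θ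
    have hr0 : (0:ℝ) < r := lt_trans hR₁ hr.1
    have hrne : r ≠ 0 := ne_of_gt hr0
    have hsχ : Real.sin χ ≠ 0 := ne_of_gt (Real.sin_pos_of_pos_of_lt_pi hχ.1 hχ.2)
    set K : ℝ := (m : ℝ) * Real.cos (m * θ) * Real.sin χ with hK
    set C : ℝ := (R₂ - R₁) / (2 * π) with hC
    -- derivative of the radial term
    have heq : (fun s => s ^ 2 * ur s χ θ) =ᶠ[nhds r]
        (fun s => K * (C * (Real.cos (2 * π * (s - R₁) / (R₂ - R₁)) - 1))) := by
      filter_upwards [eventually_ne_nhds hrne] with s hs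
      rw [hur, hU]
      field_simp
      ring
    have hg : HasDerivAt (fun s => 2 * π * (s - R₁) / (R₂ - R₁)) (2 * π * 1 / (R₂ - R₁)) r :=
      (((hasDerivAt_id r).sub_const R₁).const_mul (2 * π)).div_const (R₂ - R₁)
    have hcos : HasDerivAt (fun s => Real.cos (2 * π * (s - R₁) / (R₂ - R₁)))
        (-Real.sin (2 * π * (r - R₁) / (R₂ - R₁)) * (2 * π * 1 / (R₂ - R₁))) r :=
      (Real.hasDerivAt_cos _).comp r hg
    have hrad : HasDerivAt (fun s => K * (C * (Real.cos (2 * π * (s - R₁) / (R₂ - R₁)) - 1)))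
        (K * (C * (-Real.sin (2 * π * (r - R₁) / (R₂ - R₁)) * (2 * π * 1 / (R₂ - R₁))))) r :=
      ((hcos.sub_const 1).const_mul C).const_mul K
    have hd1 : deriv (fun s => s ^ 2 * ur s χ θ) r
        = K * (C * (-Real.sin (2 * π * (r - R₁) / (R₂ - R₁)) * (2 * π * 1 / (R₂ - R₁)))) := by
      rw [heq.deriv_eq, hrad.deriv]
    -- derivative of the χ term is zero
    have hd2 : deriv (fun φ => Real.sin φ * uχ r φ θ) χ = 0 := by
      simp [huχ]
    -- derivative of the θ term
    have hsin : HasDerivAt (fun t : ℝ => Real.sin ((m : ℝ) * t))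
        (Real.cos ((m : ℝ) * θ) * ((m : ℝ) * 1)) θ :=
      (Real.hasDerivAt_sin _).comp θ ((hasDerivAt_id θ).const_mul (m : ℝ))
    have hθd : HasDerivAt (fun t : ℝ => 1 / r * W r * Real.sin ((m : ℝ) * t) * Real.sin χ ^ 2)
        (1 / r * W r * (Real.cos ((m : ℝ) * θ) * ((m : ℝ) * 1)) * Real.sin χ ^ 2) θ :=
      (hsin.const_mul (1 / r * W r)).mul_const (Real.sin χ ^ 2)
    have hd3 : deriv (fun t => uθ r χ t) θ
        = 1 / r * W r * (Real.cos ((m : ℝ) * θ) * ((m : ℝ) * 1)) * Real.sin χ ^ 2 := by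
      simp only [huθ]
      exact hθd.deriv
    rw [hd1, hd2, hd3, hK, hC, hW r]
    field_simp
    ring
  · intro χ θ
    have h1 : (2 : ℝ) * π * (R₁ - R₁) / (R₂ - R₁) = 0 := by simp
    have h2 : (2 : ℝ) * π * (R₂ - R₁) / (R₂ - R₁) = 2 * π := by
      field_simp
    have hU1 : U R₁ = 0 := by rw [hU, h1]; simp
    have hU2 : U R₂ = 0 := by rw [hU, h2]; simp [Real.cos_two_pi]
    have hW1 : W R₁ = 0 := by rw [hW, h1]; simp
    have hW2 : W R₂ = 0 := by rw [hW, h2]; simp [Real.sin_two_pi]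
    refine ⟨?_, ?_, ?_, ?_, ?_, ?_⟩ <;>
      simp [hur, huχ, huθ, hU1, hU2, hW1, hW2]
end

section
/- With the 3D test field u of the previous statement (u_r = m Ũ(r) cos(mθ) sin χ, u_χ = 0, u_θ = (1/r)W(r) sin(mθ) sin²χ) on the spherical shell R₁ < r < R₂, one has ∫_Ω (2u_r² − u_χ² − u_θ²)/r³ dx = m² G₁(ρ) − G₂(ρ), where ρ = R₂/R₁ and G₁, G₂ are strictly positive quantities independent of m. Consequently, for m sufficiently large, ∫_Ω (2u_r² − u_χ² − u_θ²)/r³ dx > 0. -/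
open Real MeasureTheory intervalIntegral

lemma cos_sq_int (m : ℕ) (hm : 0 < m) : ∫ θ in (0:ℝ)..(2*π), Real.cos ((m:ℝ)*θ)^2 = π := by
  have hm' : (m:ℝ) ≠ 0 := by positivity
  rw [show (fun θ : ℝ => Real.cos ((m:ℝ)*θ)^2) = fun θ => (fun x => Real.cos x ^2) ((m:ℝ)*θ) from rfl,
    intervalIntegral.integral_comp_mul_left (fun x => Real.cos x ^2) hm', integral_cos_sq]
  have h0 : Real.sin ((m:ℝ)*(2*π)) = 0 := by
    have := Real.sin_nat_mul_pi (2*m)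
    push_cast at this
    rw [show (m:ℝ)*(2*π) = 2*(m:ℝ)*π by ring]
    exact this
  rw [mul_zero, h0]
  simp only [smul_eq_mul, mul_zero, zero_mul, sin_zero, cos_zero, sub_zero, zero_sub, mul_one, zero_add]
  field_simp

lemma sin_sq_int (m : ℕ) (hm : 0 < m) : ∫ θ in (0:ℝ)..(2*π), Real.sin ((m:ℝ)*θ)^2 = π := by
  have hm' : (m:ℝ) ≠ 0 := by positivity
  rw [show (fun θ : ℝ => Real.sin ((m:ℝ)*θ)^2) = fun θ => (fun x => Real.sin x ^2) ((m:ℝ)*θ) from rfl,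
    intervalIntegral.integral_comp_mul_left (fun x => Real.sin x ^2) hm', integral_sin_sq]
  have h0 : Real.sin ((m:ℝ)*(2*π)) = 0 := by
    have := Real.sin_nat_mul_pi (2*m)
    push_cast at this
    rw [show (m:ℝ)*(2*π) = 2*(m:ℝ)*π by ring]
    exact this
  rw [h0, zero_mul]
  simp only [smul_eq_mul, mul_zero, zero_mul, sin_zero, cos_zero, sub_zero, zero_sub, mul_one, zero_add]
  field_simp

lemma sin3_int : ∫ χ in (0:ℝ)..π, Real.sin χ^3 = 4/3 := by
  have : ∀ χ ∈ Set.uIcc (0:ℝ) π, HasDerivAt (fun x => Real.cos x^3/3 - Real.cos x) (Real.sin χ^3) χ := by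
    intro χ _
    have h : HasDerivAt (fun x => Real.cos x^3/3 - Real.cos x)
        ((3 * Real.cos χ^2 * (-Real.sin χ))/3 - (-Real.sin χ)) χ := by
      exact (((Real.hasDerivAt_cos χ).pow 3).div_const 3).sub (Real.hasDerivAt_cos χ)
    convert h using 1
    linear_combination Real.sin χ * Real.sin_sq_add_cos_sq χ
  rw [intervalIntegral.integral_eq_sub_of_hasDerivAt this
    (by apply Continuous.intervalIntegrable; continuity)]
  simp [Real.cos_pi]
  norm_num

lemma sin5_int : ∫ χ in (0:ℝ)..π, Real.sin χ^5 = 16/15 := by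
  have : ∀ χ ∈ Set.uIcc (0:ℝ) π, HasDerivAt
      (fun x => -Real.cos x + 2*Real.cos x^3/3 - Real.cos x^5/5) (Real.sin χ^5) χ := by
    intro χ _
    have h : HasDerivAt (fun x => -Real.cos x + 2*Real.cos x^3/3 - Real.cos x^5/5)
        (-(-Real.sin χ) + 2*(3*Real.cos χ^2*(-Real.sin χ))/3 - (5*Real.cos χ^4*(-Real.sin χ))/5) χ := by
      exact (((Real.hasDerivAt_cos χ).neg.add
        ((((Real.hasDerivAt_cos χ).pow 3).const_mul 2).div_const 3)).sub
        (((Real.hasDerivAt_cos χ).pow 5).div_const 5))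
    convert h using 1
    linear_combination (Real.sin χ * (Real.sin χ^2 + 1 - Real.cos χ^2)) * Real.sin_sq_add_cos_sq χ
  rw [intervalIntegral.integral_eq_sub_of_hasDerivAt this
    (by apply Continuous.intervalIntegrable; continuity)]
  simp [Real.cos_pi]
  norm_num
set_option maxHeartbeats 1000000 in
/-- For the 3D test field `u_r = m Ũ(r) cos(mθ) sin χ`, `u_χ = 0`,
`u_θ = (1/r) W(r) sin(mθ) sin²χ` on the spherical shell, the integral
`∫_Ω (2u_r² − u_χ² − u_θ²)/r³ dx`, computed in spherical coordinates with volume element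
`r² sin χ`, equals `m² G₁ − G₂` with `G₁, G₂ > 0` independent of `m`; hence it is positive
for all sufficiently large `m`. -/
theorem stmt_17 (R₁ R₂ : ℝ) (hR₁ : 0 < R₁) (hR : R₁ < R₂)
    (U W : ℝ → ℝ)
    (hU : ∀ r, U r = (1 / r) * ((R₂ - R₁) / (2 * π)) *
      (Real.cos (2 * π * (r - R₁) / (R₂ - R₁)) - 1))
    (hW : ∀ r, W r = Real.sin (2 * π * (r - R₁) / (R₂ - R₁))) :
    ∃ G₁ G₂ : ℝ, 0 < G₁ ∧ 0 < G₂ ∧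
      (∀ m : ℕ, 0 < m →
        (∫ r in R₁..R₂, ∫ χ in (0:ℝ)..π, ∫ θ in (0:ℝ)..(2 * π),
          ((2 * ((m : ℝ) * (U r / r) * Real.cos (m * θ) * Real.sin χ) ^ 2
              - ((1 / r) * W r * Real.sin (m * θ) * Real.sin χ ^ 2) ^ 2) / r ^ 3)
            * (r ^ 2 * Real.sin χ))
          = (m : ℝ) ^ 2 * G₁ - G₂) ∧
      ∃ M : ℕ, ∀ m : ℕ, M ≤ m →
        0 < ∫ r in R₁..R₂, ∫ χ in (0:ℝ)..π, ∫ θ in (0:ℝ)..(2 * π),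
          ((2 * ((m : ℝ) * (U r / r) * Real.cos (m * θ) * Real.sin χ) ^ 2
              - ((1 / r) * W r * Real.sin (m * θ) * Real.sin χ ^ 2) ^ 2) / r ^ 3)
            * (r ^ 2 * Real.sin χ) := by
  have hπ : (0:ℝ) < π := Real.pi_pos
  have hRR : (0:ℝ) < R₂ - R₁ := by linarith
  set f₁ : ℝ → ℝ := fun r => 8*π/3 * (U r)^2 / r^3 with hf₁
  set f₂ : ℝ → ℝ := fun r => 16*π/15 * (W r)^2 / r^3 with hf₂
  have hicc : Set.uIcc R₁ R₂ = Set.Icc R₁ R₂ := Set.uIcc_of_le hR.le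
  have hs : ∀ r ∈ Set.uIcc R₁ R₂, r ≠ 0 := by
    intro r hr
    rw [hicc] at hr
    exact ne_of_gt (lt_of_lt_of_le hR₁ hr.1)
  have hUc : ContinuousOn f₁ (Set.uIcc R₁ R₂) := by
    have : ContinuousOn U (Set.uIcc R₁ R₂) := by
      rw [funext hU]
      exact ((continuousOn_const.div continuousOn_id hs).mul continuousOn_const).mul
        (Continuous.continuousOn (by fun_prop))
    exact (continuousOn_const.mul (this.pow 2)).div
      (Continuous.continuousOn (by fun_prop)) (fun r hr => pow_ne_zero 3 (hs r hr))
  have hWc : ContinuousOn f₂ (Set.uIcc R₁ R₂) := by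
    have : ContinuousOn W (Set.uIcc R₁ R₂) := by
      rw [funext hW]; exact Continuous.continuousOn (by fun_prop)
    exact (continuousOn_const.mul (this.pow 2)).div
      (Continuous.continuousOn (by fun_prop)) (fun r hr => pow_ne_zero 3 (hs r hr))
  have hI₁ : IntervalIntegrable f₁ volume R₁ R₂ := hUc.intervalIntegrable
  have hI₂ : IntervalIntegrable f₂ volume R₁ R₂ := hWc.intervalIntegrable
  have heq : ∀ m : ℕ, 0 < m →
      (∫ r in R₁..R₂, ∫ χ in (0:ℝ)..π, ∫ θ in (0:ℝ)..(2 * π),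
          ((2 * ((m : ℝ) * (U r / r) * Real.cos (m * θ) * Real.sin χ) ^ 2
              - ((1 / r) * W r * Real.sin (m * θ) * Real.sin χ ^ 2) ^ 2) / r ^ 3)
            * (r ^ 2 * Real.sin χ))
        = (m : ℝ)^2 * (∫ r in R₁..R₂, f₁ r) - ∫ r in R₁..R₂, f₂ r := by
    intro m hm
    have key : ∀ r ∈ Set.uIcc R₁ R₂,
        (∫ χ in (0:ℝ)..π, ∫ θ in (0:ℝ)..(2 * π),
          ((2 * ((m : ℝ) * (U r / r) * Real.cos (m * θ) * Real.sin χ) ^ 2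
              - ((1 / r) * W r * Real.sin (m * θ) * Real.sin χ ^ 2) ^ 2) / r ^ 3)
            * (r ^ 2 * Real.sin χ))
          = (m : ℝ)^2 * f₁ r - f₂ r := by
      intro r hr
      have hr0 : r ≠ 0 := hs r hr
      have hθ : ∀ χ : ℝ, (∫ θ in (0:ℝ)..(2 * π),
          ((2 * ((m : ℝ) * (U r / r) * Real.cos (m * θ) * Real.sin χ) ^ 2
              - ((1 / r) * W r * Real.sin (m * θ) * Real.sin χ ^ 2) ^ 2) / r ^ 3)
            * (r ^ 2 * Real.sin χ))
          = (2*((m:ℝ)*(U r/r)*Real.sin χ)^2/r^3*(r^2*Real.sin χ)) * π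
            + (-(((1/r)*W r*Real.sin χ^2)^2/r^3*(r^2*Real.sin χ))) * π := by
        intro χ
        have h1 : (∫ θ in (0:ℝ)..(2 * π),
            ((2 * ((m : ℝ) * (U r / r) * Real.cos (m * θ) * Real.sin χ) ^ 2
              - ((1 / r) * W r * Real.sin (m * θ) * Real.sin χ ^ 2) ^ 2) / r ^ 3)
            * (r ^ 2 * Real.sin χ))
            = ∫ θ in (0:ℝ)..(2 * π),
              ((2*((m:ℝ)*(U r/r)*Real.sin χ)^2/r^3*(r^2*Real.sin χ)) * Real.cos ((m:ℝ)*θ)^2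
              + (-(((1/r)*W r*Real.sin χ^2)^2/r^3*(r^2*Real.sin χ))) * Real.sin ((m:ℝ)*θ)^2) :=
          intervalIntegral.integral_congr (fun θ _ => by ring)
        rw [h1, intervalIntegral.integral_add
            (Continuous.intervalIntegrable (by fun_prop) _ _)
            (Continuous.intervalIntegrable (by fun_prop) _ _),
          intervalIntegral.integral_const_mul, intervalIntegral.integral_const_mul,
          cos_sq_int m hm, sin_sq_int m hm]
      simp_rw [hθ]
      have h2 : (∫ χ in (0:ℝ)..π,
          ((2*((m:ℝ)*(U r/r)*Real.sin χ)^2/r^3*(r^2*Real.sin χ)) * π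
            + (-(((1/r)*W r*Real.sin χ^2)^2/r^3*(r^2*Real.sin χ))) * π))
          = ∫ χ in (0:ℝ)..π,
            ((2*π*((m:ℝ)*(U r/r))^2/r^3*r^2) * Real.sin χ^3
              + (-(π*((1/r)*W r)^2/r^3*r^2)) * Real.sin χ^5) :=
        intervalIntegral.integral_congr (fun χ _ => by ring)
      rw [h2, intervalIntegral.integral_add
          (Continuous.intervalIntegrable (by fun_prop) _ _)
          (Continuous.intervalIntegrable (by fun_prop) _ _),
        intervalIntegral.integral_const_mul, intervalIntegral.integral_const_mul,
        sin3_int, sin5_int, hf₁, hf₂]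
      field_simp
      ring
    rw [intervalIntegral.integral_congr key,
      intervalIntegral.integral_sub (hI₁.const_mul _) hI₂,
      intervalIntegral.integral_const_mul]
  have hG₁ : 0 < ∫ r in R₁..R₂, f₁ r := by
    apply intervalIntegral.intervalIntegral_pos_of_pos_on hI₁ _ hR
    intro x hx
    have hx0 : 0 < x := lt_trans hR₁ hx.1
    have hUx : U x ≠ 0 := by
      rw [hU x]
      have h9 : 0 < x - R₁ := by linarith [hx.1]
      have ht0 : 0 < 2 * π * (x - R₁) / (R₂ - R₁) := by
        apply div_pos _ hRR; nlinarith [mul_pos hπ h9]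
      have ht2 : 2 * π * (x - R₁) / (R₂ - R₁) < 2 * π := by
        rw [div_lt_iff₀ hRR]; nlinarith [hx.2]
      have hc : Real.cos (2 * π * (x - R₁) / (R₂ - R₁)) ≠ 1 := by
        intro h
        rcases Real.cos_eq_one_iff_of_lt_of_lt (x := 2 * π * (x - R₁) / (R₂ - R₁))
          (by linarith) (by linarith) |>.mp h with h'
        · linarith
      apply mul_ne_zero (mul_ne_zero _ _) (sub_ne_zero.mpr hc)
      · simp [ne_of_gt hx0]
      · positivity
    show 0 < 8*π/3 * (U x)^2 / x^3
    positivity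
  have hG₂ : 0 < ∫ r in R₁..R₂, f₂ r := by
    set c : ℝ := (R₁ + R₂)/2 with hc
    have hc1 : R₁ < c := by rw [hc]; linarith
    have hc2 : c < R₂ := by rw [hc]; linarith
    have hsub1 : Set.uIcc R₁ c ⊆ Set.uIcc R₁ R₂ := by
      rw [hicc, Set.uIcc_of_le hc1.le]; exact Set.Icc_subset_Icc le_rfl hc2.le
    have hsub2 : Set.uIcc c R₂ ⊆ Set.uIcc R₁ R₂ := by
      rw [hicc, Set.uIcc_of_le hc2.le]; exact Set.Icc_subset_Icc hc1.le le_rfl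
    have hJ1 : IntervalIntegrable f₂ volume R₁ c := (hWc.mono hsub1).intervalIntegrable
    have hJ2 : IntervalIntegrable f₂ volume c R₂ := (hWc.mono hsub2).intervalIntegrable
    rw [← intervalIntegral.integral_add_adjacent_intervals hJ1 hJ2]
    have hpos : 0 < ∫ r in R₁..c, f₂ r := by
      apply intervalIntegral.intervalIntegral_pos_of_pos_on hJ1 _ hc1
      intro x hx
      have hx0 : 0 < x := lt_trans hR₁ hx.1
      have hWx : W x ≠ 0 := by
        rw [hW x]
        apply ne_of_gt
        apply Real.sin_pos_of_pos_of_lt_pi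
        · have h9 : 0 < x - R₁ := by linarith [hx.1]
          apply div_pos _ hRR; nlinarith [mul_pos hπ h9]
        · rw [div_lt_iff₀ hRR]
          have : x < c := hx.2
          rw [hc] at this
          nlinarith
      show 0 < 16*π/15 * (W x)^2 / x^3
      positivity
    have hnn : 0 ≤ ∫ r in c..R₂, f₂ r := by
      apply intervalIntegral.integral_nonneg hc2.le
      intro x hx
      have hx0 : 0 < x := lt_of_lt_of_le (lt_trans hR₁ hc1) hx.1
      show (0:ℝ) ≤ 16*π/15 * (W x)^2 / x^3
      positivity
    linarith
  refine ⟨_, _, hG₁, hG₂, heq, ?_⟩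
  obtain ⟨N, hN⟩ := exists_nat_gt ((∫ r in R₁..R₂, f₂ r) / ∫ r in R₁..R₂, f₁ r)
  refine ⟨N + 1, fun m hm => ?_⟩
  have hm1 : 0 < m := lt_of_lt_of_le (Nat.succ_pos N) hm
  rw [heq m hm1]
  have hmN : ((∫ r in R₁..R₂, f₂ r) / ∫ r in R₁..R₂, f₁ r) < (m:ℝ) := by
    calc ((∫ r in R₁..R₂, f₂ r) / ∫ r in R₁..R₂, f₁ r) < (N:ℝ) := hN
    _ ≤ (m:ℝ) := by exact_mod_cast le_trans (Nat.le_succ N) hm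
  have h1m : (1:ℝ) ≤ (m:ℝ) := by exact_mod_cast hm1
  have : (∫ r in R₁..R₂, f₂ r) < (m:ℝ) * ∫ r in R₁..R₂, f₁ r := by
    rw [div_lt_iff₀ hG₁] at hmN; linarith
  nlinarith [hG₁]
end
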